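/- arXiv:1610.01773 — 2 statements merged into one kernel-verified Lean document; each statement's English description precedes it below -/
import Mathlib

section
/- Let a, b, f, h ∈ ℂ with h ≠ 0. Suppose that for every λ, μ ∈ ℂ the quadratic form Q_{λ,μ}(x, y, z) = x·z + λ·x·(a·x + b·y) + λ·y·(f·y + h·z) + μ·z·(f·y + h·z) on ℂ³ can be written as a product L₁·L₂ of two linear forms. Then a = b = f = 0. -/
theorem stmt_12 (a b f h : ℂ) (hh : h ≠ 0)
    (hfac : ∀ l m : ℂ, ∃ p q s p' q' s' : ℂ, ∀ x y z : ℂ,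
      x * z + l * (x * (a * x + b * y)) + l * (y * (f * y + h * z)) +
          m * (z * (f * y + h * z)) =
        (p * x + q * y + s * z) * (p' * x + q' * y + s' * z)) :
    a = 0 ∧ b = 0 ∧ f = 0 := by
  have key : ∀ l m : ℂ,
      (2*l*a)*(2*l*f)*(2*m*h) - (2*l*a)*(l*h+m*f)^2 - (l*b)^2*(2*m*h)
        + 2*(l*b)*(l*h+m*f) - 2*l*f = 0 := by
    intro l m
    obtain ⟨p, q, s, p', q', s', hq⟩ := hfac l m
    have hA : l*a = p*p' := by linear_combination hq 1 0 0
    have hD : l*f = q*q' := by linear_combination hq 0 1 0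
    have hF : m*h = s*s' := by linear_combination hq 0 0 1
    have hB : l*b = p*q' + q*p' := by
      linear_combination hq 1 1 0 - hq 1 0 0 - hq 0 1 0
    have hC : (1:ℂ) = p*s' + s*p' := by
      linear_combination hq 1 0 1 - hq 1 0 0 - hq 0 0 1
    have hE : l*h + m*f = q*s' + s*q' := by
      linear_combination hq 0 1 1 - hq 0 1 0 - hq 0 0 1
    linear_combination
      (2*((2*l*f)*(2*m*h) - (l*h+m*f)^2)) * hA
      + (2*(l*h+m*f) - (l*b + (p*q'+q*p'))*(2*m*h)) * hB
      + (2*(p*q'+q*p')*(l*h+m*f) - (2*l*f)*(1 + (p*s'+s*p'))) * hC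
      + (2*(2*(p*p')*(2*m*h) - (p*s'+s*p')^2)) * hD
      + (2*(p*q'+q*p')*(p*s'+s*p') - 2*(p*p')*((l*h+m*f) + (q*s'+s*q'))) * hE
      + (2*(2*(p*p')*2*(q*q') - (p*q'+q*p')^2)) * hF
  have hE1 := key 1 0
  have hE2 := key 2 0
  have hE3 := key 3 0
  have hf : f = 0 := by
    linear_combination (-3/2)*hE1 + (3/4)*hE2 + (-1/6)*hE3
  have hvb : 2*h*b = 0 := by
    linear_combination (-5/2)*hE1 + 2*hE2 + (-1/2)*hE3
  have hb : b = 0 := by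
    rcases mul_eq_zero.mp hvb with h1 | h1
    · exact absurd (by linear_combination h1/2 : h = (0:ℂ)) hh
    · exact h1
  have hva : 2*h^2*a = 0 := by
    linear_combination (-1/2)*hE1 + (1/2)*hE2 + (-1/6)*hE3
  have ha : a = 0 := by
    rcases mul_eq_zero.mp hva with h1 | h1
    · have : h^2 = 0 := by linear_combination h1/2
      exact absurd (pow_eq_zero_iff (by norm_num) |>.mp this) hh
    · exact h1
  exact ⟨ha, hb, hf⟩
end

section
/- Let c, d, e, g, h, λ, μ ∈ ℂ. In ℂ[x, y, z], set φ = c·x² + d·x·y + e·y², ψ = g·y² + h·z, and h_{λ,μ} = x·z − y⁴ + λ·(x·φ + y·ψ) + μ·(y³·φ + z·ψ). Define X = x + h(λy + μz) + gμy² − hλμ(cx² + dxy + ey²) + h²λ²μ·y(cx + dy) − ch³λ³μ·y² and Z = z + λ(cx² + dxy + ey²) − hλ²·y(cx + dy) + ch²λ³·y². Then h_{λ,μ} − X·Z + λ·(c·h³·λ³ − d·h²·λ² + e·h·λ − g)·y³ lies in the ideal (x, y, z)⁴ of ℂ[x, y, z]. -/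
open MvPolynomial in
theorem stmt_14 (c d e g h l m : ℂ) :
    let x : MvPolynomial (Fin 3) ℂ := X 0
    let y : MvPolynomial (Fin 3) ℂ := X 1
    let z : MvPolynomial (Fin 3) ℂ := X 2
    let φ : MvPolynomial (Fin 3) ℂ := C c * x ^ 2 + C d * x * y + C e * y ^ 2
    let ψ : MvPolynomial (Fin 3) ℂ := C g * y ^ 2 + C h * z
    let hlm : MvPolynomial (Fin 3) ℂ :=
      x * z - y ^ 4 + C l * (x * φ + y * ψ) + C m * (y ^ 3 * φ + z * ψ)
    let XX : MvPolynomial (Fin 3) ℂ :=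
      x + C h * (C l * y + C m * z) + C (g * m) * y ^ 2
        - C (h * l * m) * (C c * x ^ 2 + C d * x * y + C e * y ^ 2)
        + C (h ^ 2 * l ^ 2 * m) * (y * (C c * x + C d * y))
        - C (c * h ^ 3 * l ^ 3 * m) * y ^ 2
    let ZZ : MvPolynomial (Fin 3) ℂ :=
      z + C l * (C c * x ^ 2 + C d * x * y + C e * y ^ 2)
        - C (h * l ^ 2) * (y * (C c * x + C d * y))
        + C (c * h ^ 2 * l ^ 3) * y ^ 2
    hlm - XX * ZZ + C (l * (c * h ^ 3 * l ^ 3 - d * h ^ 2 * l ^ 2 + e * h * l - g)) * y ^ 3 ∈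
      (Ideal.span {x, y, z} : Ideal (MvPolynomial (Fin 3) ℂ)) ^ 4 := by
  intro x y z φ ψ hlm XX ZZ
  set I : Ideal (MvPolynomial (Fin 3) ℂ) := Ideal.span {x, y, z} with hI
  have hx : x ∈ I := Ideal.subset_span (by simp)
  have hy : y ∈ I := Ideal.subset_span (by simp)
  have h4 : ∀ p q r s : MvPolynomial (Fin 3) ℂ,
      p ∈ I → q ∈ I → r ∈ I → s ∈ I → p * q * r * s ∈ I ^ 4 := by
    intro p q r s hp hq hr hs
    have : I ^ 4 = I * I * I * I := by ring
    rw [this]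
    exact Ideal.mul_mem_mul (Ideal.mul_mem_mul (Ideal.mul_mem_mul hp hq) hr) hs
  have key : hlm - XX * ZZ
        + C (l * (c * h ^ 3 * l ^ 3 - d * h ^ 2 * l ^ 2 + e * h * l - g)) * y ^ 3
      = C (-(1 + e*g*l*m) + d*g*h*l^2*m - c*g*h^2*l^3*m + e^2*h*l^2*m - 2*d*e*h^2*l^3*m
            + 2*c*e*h^3*l^4*m + d^2*h^3*l^4*m - 2*c*d*h^4*l^5*m + c^2*h^5*l^6*m)
          * (y * y * y * y)
        + (C (e*m) * y) * (y * y * y * y)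
        + (C (-(d*g*l*m) + c*g*h*l^2*m + 2*d*e*h*l^2*m - 2*d^2*h^2*l^3*m + 4*c*d*h^3*l^4*m
            - 2*c*e*h^2*l^3*m - 2*c^2*h^4*l^5*m)) * (x * y * y * y)
        + (C (d*m) * y) * (x * y * y * y)
        + (C (-(c*g*l*m) + 2*c*e*h*l^2*m - 4*c*d*h^2*l^3*m + 3*c^2*h^3*l^4*m + d^2*h*l^2*m))
          * (x * x * y * y)
        + (C (c*m) * y) * (x * x * y * y)
        + (C (2*c*d*h*l^2*m - 2*c^2*h^2*l^3*m)) * (x * x * x * y)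
        + (C (c^2*h*l^2*m)) * (x * x * x * x) := by
    simp only [hlm, XX, ZZ, φ, ψ, map_add, map_sub, map_mul, map_pow, map_neg, map_one,
      map_ofNat]
    ring
  rw [key]
  refine add_mem (add_mem (add_mem (add_mem (add_mem (add_mem (add_mem ?_ ?_) ?_) ?_) ?_) ?_) ?_) ?_
  all_goals exact Ideal.mul_mem_left _ _ (h4 _ _ _ _ (by assumption) (by assumption) (by assumption) (by assumption))
end
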